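/- arXiv:2503.11854 — 3 statements merged into one kernel-verified Lean document; each statement's English description precedes it below -/
import Mathlib

section
/- Let n ≥ 1 be an integer, C₁, C₂ ∈ ℝ, and let π(θ) = ‖θ‖₂^{2−n}(C₁‖θ‖₂ + C₂‖θ‖₂^{−1})² for θ ∈ ℝⁿ, θ ≠ 0. Then for every θ ∈ ℝⁿ with θ ≠ 0 and C₁‖θ‖₂ + C₂‖θ‖₂^{−1} ≠ 0, one has −‖∇π(θ)‖₂²/π(θ)² + 2·Δπ(θ)/π(θ) = (4n − n²)/‖θ‖₂². -/
/-!
Off the origin `π(θ) = h(‖θ‖²)` with `h(s) = s^(-n/2) (C₁ s + C₂)²`. For any function of `‖θ‖²`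
one has `∇π = 2 h'(s) θ` and `Δπ = 2n h'(s) + 4 s h''(s)`, so with `u = h'/h` the left-hand side
is `4 s u² + 4 n u + 8 s u'`. Since `u = -n/(2s) + 2C₁/(C₁ s + C₂)`, all terms involving `C₁`
cancel and `(4n - n²)/s` remains.
-/

/-- The Laplacian of `g : ℝⁿ → ℝ` at a point: trace of the Hessian, computed as
the sum of second partial derivatives along the standard basis. -/
noncomputable def lap {n : ℕ} (g : EuclideanSpace ℝ (Fin n) → ℝ)
    (θ : EuclideanSpace ℝ (Fin n)) : ℝ :=
  ∑ i : Fin n, fderiv ℝ (fun x => fderiv ℝ g x (EuclideanSpace.single i 1)) θ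
    (EuclideanSpace.single i 1)

/-- The weighting function π(θ) = ‖θ‖^(2−n) (C₁‖θ‖ + C₂‖θ‖⁻¹)². -/
noncomputable def piFun (n : ℕ) (C₁ C₂ : ℝ) (θ : EuclideanSpace ℝ (Fin n)) : ℝ :=
  ‖θ‖ ^ ((2 : ℝ) - n) * (C₁ * ‖θ‖ + C₂ * ‖θ‖⁻¹) ^ 2

open Real Filter Topology

open scoped RealInnerProductSpace

section RadialFunction

variable {E : Type*} [NormedAddCommGroup E] [InnerProductSpace ℝ E]

theorem HasDerivAt.hasFDerivAt_comp_norm_sq {h : ℝ → ℝ} {h' : ℝ} {x : E}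
    (hh : HasDerivAt h h' (‖x‖ ^ 2)) :
    HasFDerivAt (fun y => h (‖y‖ ^ 2)) ((2 * h') • innerSL ℝ x) x := by
  refine (hh.comp_hasFDerivAt x (hasStrictFDerivAt_norm_sq x).hasFDerivAt).congr_fderiv ?_
  ext v
  simp only [smul_apply, coe_innerSL_apply, nsmul_eq_mul, Nat.cast_ofNat, smul_eq_mul]
  ring

theorem HasDerivAt.hasGradientAt_comp_norm_sq [CompleteSpace E] {h : ℝ → ℝ} {h' : ℝ} {x : E}
    (hh : HasDerivAt h h' (‖x‖ ^ 2)) :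
    HasGradientAt (fun y => h (‖y‖ ^ 2)) ((2 * h') • x) x := by
  rw [hasGradientAt_iff_hasFDerivAt, map_smul]
  exact hh.hasFDerivAt_comp_norm_sq

theorem fderiv_fderiv_comp_norm_sq_apply {h h' : ℝ → ℝ} {h'' : ℝ} {θ : E} (v : E)
    (hh : ∀ᶠ t in 𝓝 (‖θ‖ ^ 2), HasDerivAt h (h' t) t) (hh' : HasDerivAt h' h'' (‖θ‖ ^ 2)) :
    fderiv ℝ (fun x => fderiv ℝ (fun y => h (‖y‖ ^ 2)) x v) θ v
      = 4 * h'' * ⟪θ, v⟫ ^ 2 + 2 * h' (‖θ‖ ^ 2) * ‖v‖ ^ 2 := by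
  have hfderiv : (fun x => fderiv ℝ (fun y => h (‖y‖ ^ 2)) x v)
      =ᶠ[𝓝 θ] fun x => 2 * h' (‖x‖ ^ 2) * innerSL ℝ v x := by
    have hcont : Continuous fun x : E => ‖x‖ ^ 2 := by fun_prop
    filter_upwards [(hcont.tendsto θ).eventually hh] with x hx
    rw [hx.hasFDerivAt_comp_norm_sq.fderiv, FunLike.coe_smul, Pi.smul_apply, innerSL_apply_apply,
      innerSL_apply_apply, smul_eq_mul, real_inner_comm]
  have hderiv : HasFDerivAt (fun x => 2 * h' (‖x‖ ^ 2) * innerSL ℝ v x) _ θ :=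
    (hh'.hasFDerivAt_comp_norm_sq.const_mul 2).mul (innerSL ℝ v).hasFDerivAt
  rw [hfderiv.fderiv_eq, hderiv.fderiv]
  simp only [coe_innerSL_apply, add_apply, smul_apply, smul_eq_mul, real_inner_self_eq_norm_sq,
    real_inner_comm v θ]
  ring

end RadialFunction

theorem Filter.EventuallyEq.lap_eq {n : ℕ} {f g : EuclideanSpace ℝ (Fin n) → ℝ}
    {θ : EuclideanSpace ℝ (Fin n)} (h : f =ᶠ[𝓝 θ] g) : lap f θ = lap g θ := by
  refine Finset.sum_congr rfl fun i _ => ?_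
  have hfderiv : (fun x => fderiv ℝ f x (EuclideanSpace.single i 1))
      =ᶠ[𝓝 θ] fun x => fderiv ℝ g x (EuclideanSpace.single i 1) := by
    filter_upwards [h.eventually_nhds] with x hx
    rw [EventuallyEq.fderiv_eq hx]
  rw [hfderiv.fderiv_eq]

theorem lap_comp_norm_sq {n : ℕ} {h h' : ℝ → ℝ} {h'' : ℝ} {θ : EuclideanSpace ℝ (Fin n)}
    (hh : ∀ᶠ t in 𝓝 (‖θ‖ ^ 2), HasDerivAt h (h' t) t) (hh' : HasDerivAt h' h'' (‖θ‖ ^ 2)) :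
    lap (fun y => h (‖y‖ ^ 2)) θ = 2 * n * h' (‖θ‖ ^ 2) + 4 * h'' * ‖θ‖ ^ 2 := by
  simp only [lap, fderiv_fderiv_comp_norm_sq_apply _ hh hh', EuclideanSpace.inner_single_right,
    PiLp.norm_single, one_mul, norm_one, one_pow, ringHom_apply, Finset.sum_add_distrib,
    ← Finset.mul_sum, ← EuclideanSpace.real_norm_sq_eq, Finset.sum_const, Finset.card_univ,
    Fintype.card_fin, nsmul_eq_mul, mul_one]
  ring

section PowerTimesSquare

variable (d a b : ℝ) {t : ℝ}

theorem hasDerivAt_rpow_mul_sq (ht : t ≠ 0) :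
    HasDerivAt (fun t => t ^ d * (a * t + b) ^ 2)
      (d * t ^ (d - 1) * (a * t + b) ^ 2 + t ^ d * (2 * a * (a * t + b))) t := by
  have hlin : HasDerivAt (fun t => a * t + b) a t := by
    simpa using ((hasDerivAt_id t).const_mul a).add_const b
  refine ((hasDerivAt_rpow_const (p := d) (Or.inl ht)).fun_mul (hlin.fun_pow 2)).congr_deriv ?_
  simp only [Nat.cast_ofNat, Nat.reduceSub, pow_one]
  ring

theorem hasDerivAt_deriv_rpow_mul_sq (ht : t ≠ 0) :
    HasDerivAt (fun t => d * t ^ (d - 1) * (a * t + b) ^ 2 + t ^ d * (2 * a * (a * t + b)))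
      (d * (d - 1) * t ^ (d - 1 - 1) * (a * t + b) ^ 2 + 4 * a * d * t ^ (d - 1) * (a * t + b)
        + 2 * a ^ 2 * t ^ d) t := by
  have hlin : HasDerivAt (fun t => a * t + b) a t := by
    simpa using ((hasDerivAt_id t).const_mul a).add_const b
  have hfirst := ((hasDerivAt_rpow_const (p := d - 1) (Or.inl ht)).const_mul d).fun_mul
    (hlin.fun_pow 2)
  have hsecond := (hasDerivAt_rpow_const (p := d) (Or.inl ht)).fun_mul (hlin.const_mul (2 * a))
  refine (hfirst.fun_add hsecond).congr_deriv ?_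
  simp only [Nat.cast_ofNat, Nat.reduceSub, pow_one]
  ring

end PowerTimesSquare

theorem piFun_eq_rpow_mul_sq (n : ℕ) (C₁ C₂ : ℝ) {x : EuclideanSpace ℝ (Fin n)} (hx : x ≠ 0) :
    piFun n C₁ C₂ x = (‖x‖ ^ 2) ^ (-(n : ℝ) / 2) * (C₁ * ‖x‖ ^ 2 + C₂) ^ 2 := by
  have hr : 0 < ‖x‖ := norm_pos_iff.mpr hx
  have hpow : (‖x‖ ^ 2) ^ (-(n : ℝ) / 2) = ‖x‖ ^ (-(n : ℝ)) := by
    rw [← rpow_two, ← rpow_mul hr.le]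
    ring_nf
  rw [piFun, hpow, show (2 : ℝ) - n = -n + 2 by ring, rpow_add hr, rpow_two]
  field_simp

theorem stmt0_general (n : ℕ) (C₁ C₂ : ℝ)
    (θ : EuclideanSpace ℝ (Fin n)) (hθ : θ ≠ 0)
    (hC : C₁ * ‖θ‖ + C₂ * ‖θ‖⁻¹ ≠ 0) :
    -‖gradient (piFun n C₁ C₂) θ‖ ^ 2 / (piFun n C₁ C₂ θ) ^ 2
      + 2 * lap (piFun n C₁ C₂) θ / piFun n C₁ C₂ θ
      = (4 * n - n ^ 2) / ‖θ‖ ^ 2 := by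
  have hr : 0 < ‖θ‖ := norm_pos_iff.mpr hθ
  have hs : ‖θ‖ ^ 2 ≠ 0 := by positivity
  have hq : C₁ * ‖θ‖ ^ 2 + C₂ ≠ 0 := by
    contrapose! hC
    field_simp
    linear_combination hC
  have hπ : piFun n C₁ C₂ =ᶠ[𝓝 θ]
      fun y => (‖y‖ ^ 2) ^ (-(n : ℝ) / 2) * (C₁ * ‖y‖ ^ 2 + C₂) ^ 2 :=
    (eventually_ne_nhds hθ).mono fun x hx => piFun_eq_rpow_mul_sq n C₁ C₂ hx
  have hgrad := ((hasDerivAt_rpow_mul_sq _ C₁ C₂ hs).hasGradientAt_comp_norm_sq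
    |>.congr_of_eventuallyEq hπ).gradient
  have hlap := hπ.lap_eq.trans (lap_comp_norm_sq
    ((eventually_ne_nhds hs).mono fun t ht => hasDerivAt_rpow_mul_sq _ C₁ C₂ ht)
    (hasDerivAt_deriv_rpow_mul_sq _ C₁ C₂ hs))
  rw [hgrad, hlap, piFun_eq_rpow_mul_sq n C₁ C₂ hθ, norm_smul, mul_pow, norm_eq_abs, sq_abs]
  simp only [rpow_sub_one hs]
  have ht : (‖θ‖ ^ 2) ^ (-(n : ℝ) / 2) ≠ 0 := by positivity
  generalize (‖θ‖ ^ 2) ^ (-(n : ℝ) / 2) = t at ht ⊢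
  generalize C₁ * ‖θ‖ ^ 2 + C₂ = q at hq ⊢
  field_simp
  ring

theorem stmt0 (n : ℕ) (hn : 1 ≤ n) (C₁ C₂ : ℝ)
    (θ : EuclideanSpace ℝ (Fin n)) (hθ : θ ≠ 0)
    (hC : C₁ * ‖θ‖ + C₂ * ‖θ‖⁻¹ ≠ 0) :
    -‖gradient (piFun n C₁ C₂) θ‖ ^ 2 / (piFun n C₁ C₂ θ) ^ 2
      + 2 * lap (piFun n C₁ C₂) θ / piFun n C₁ C₂ θ
      = (4 * n - n ^ 2) / ‖θ‖ ^ 2 :=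
  stmt0_general n C₁ C₂ θ hθ hC
end

section
/- Let n ≥ 1 be an integer, C₁, C₂ ∈ ℝ, σ² > 0, and let π(θ) = ‖θ‖₂^{2−n}(C₁‖θ‖₂ + C₂‖θ‖₂^{−1})² and b(θ) = σ²·[2 − n + 2(C₁‖θ‖₂ − C₂‖θ‖₂^{−1})/(C₁‖θ‖₂ + C₂‖θ‖₂^{−1})]·θ/‖θ‖₂², both defined for θ ∈ ℝⁿ with θ ≠ 0 and C₁‖θ‖₂ + C₂‖θ‖₂^{−1} ≠ 0. Then at every such θ, b(θ) = σ²·∇(log π)(θ). -/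
/-- The bias correction term
b(θ) = σ²[2 − n + 2(C₁‖θ‖ − C₂‖θ‖⁻¹)/(C₁‖θ‖ + C₂‖θ‖⁻¹)]·θ/‖θ‖². -/
noncomputable def bFun (n : ℕ) (C₁ C₂ σ2 : ℝ) (θ : EuclideanSpace ℝ (Fin n)) :
    EuclideanSpace ℝ (Fin n) :=
  (σ2 * (2 - (n : ℝ)
      + 2 * (C₁ * ‖θ‖ - C₂ * ‖θ‖⁻¹) / (C₁ * ‖θ‖ + C₂ * ‖θ‖⁻¹)) / ‖θ‖ ^ 2) • θ

/-!
Near θ the function log π is radial, log π(x) = g(‖x‖) with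
g(r) = (2 − n) log r + 2 log (C₁ r + C₂ r⁻¹). The gradient of a radial function g(‖x‖) at
x ≠ 0 is (g'(‖x‖) / ‖x‖) x, and g'(r) / r is exactly the scalar in front of θ in b / σ².
-/

open Real Filter Topology

section Radial

variable {E : Type*} [NormedAddCommGroup E] [InnerProductSpace ℝ E] [CompleteSpace E]

theorem hasGradientAt_norm {x : E} (hx : x ≠ 0) : HasGradientAt (‖·‖) (‖x‖⁻¹ • x) x := by
  have h := (hasStrictFDerivAt_norm_sq x).hasFDerivAt.sqrt
    (pow_ne_zero 2 (norm_ne_zero_iff.mpr hx))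
  simp only [sqrt_sq (norm_nonneg _)] at h
  rw [hasGradientAt_iff_hasFDerivAt]
  refine h.congr_fderiv (ContinuousLinearMap.ext fun v => ?_)
  simp only [one_div, mul_inv_rev, smul_apply, coe_innerSL_apply,
    nsmul_eq_mul, Nat.cast_ofNat, smul_eq_mul, map_smul, InnerProductSpace.toDual_apply_apply]
  field_simp

theorem HasDerivAt.hasGradientAt_comp_norm {f : ℝ → ℝ} {f' : ℝ} {x : E} (hx : x ≠ 0)
    (hf : HasDerivAt f f' ‖x‖) : HasGradientAt (fun y => f ‖y‖) ((f' / ‖x‖) • x) x := by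
  rw [hasGradientAt_iff_hasFDerivAt]
  refine (hf.comp_hasFDerivAt x (hasGradientAt_norm hx).hasFDerivAt).congr_fderiv ?_
  simp only [div_eq_mul_inv, mul_smul, map_smul]

end Radial

noncomputable def logPiProfile (a C₁ C₂ r : ℝ) : ℝ :=
  a * log r + 2 * log (C₁ * r + C₂ * r⁻¹)

theorem hasDerivAt_logPiProfile (a C₁ C₂ : ℝ) {r : ℝ} (hr : r ≠ 0)
    (hu : C₁ * r + C₂ * r⁻¹ ≠ 0) :
    HasDerivAt (logPiProfile a C₁ C₂)
      (a / r + 2 * (C₁ - C₂ / r ^ 2) / (C₁ * r + C₂ * r⁻¹)) r := by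
  have hlin : HasDerivAt (fun s => C₁ * s + C₂ * s⁻¹) (C₁ - C₂ / r ^ 2) r :=
    (((hasDerivAt_id r).const_mul C₁).add ((hasDerivAt_inv hr).const_mul C₂)).congr_deriv
      (by ring)
  exact (((hasDerivAt_log hr).const_mul a).add ((hlin.log hu).const_mul 2)).congr_deriv
    (by ring)

theorem log_piFun {n : ℕ} {C₁ C₂ : ℝ} {x : EuclideanSpace ℝ (Fin n)} (hx : x ≠ 0)
    (hu : C₁ * ‖x‖ + C₂ * ‖x‖⁻¹ ≠ 0) :
    log (piFun n C₁ C₂ x) = logPiProfile (2 - n) C₁ C₂ ‖x‖ := by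
  have hr : 0 < ‖x‖ := norm_pos_iff.mpr hx
  rw [piFun, log_mul (rpow_pos_of_pos hr _).ne' (pow_ne_zero 2 hu), log_rpow hr, log_pow,
    logPiProfile]
  push_cast
  ring

theorem log_piFun_eventuallyEq {n : ℕ} {C₁ C₂ : ℝ} {θ : EuclideanSpace ℝ (Fin n)} (hθ : θ ≠ 0)
    (hC : C₁ * ‖θ‖ + C₂ * ‖θ‖⁻¹ ≠ 0) :
    (fun x => log (piFun n C₁ C₂ x)) =ᶠ[𝓝 θ] fun x => logPiProfile (2 - n) C₁ C₂ ‖x‖ := by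
  have hcont : ContinuousAt (fun x : EuclideanSpace ℝ (Fin n) => C₁ * ‖x‖ + C₂ * ‖x‖⁻¹) θ :=
    (continuous_norm.continuousAt.const_mul _).add
      ((continuous_norm.continuousAt.inv₀ (norm_ne_zero_iff.mpr hθ)).const_mul _)
  filter_upwards [isOpen_compl_singleton.eventually_mem hθ, hcont.eventually_ne hC]
    with x hx hu using log_piFun hx hu

theorem stmt3_general (n : ℕ) (C₁ C₂ σ2 : ℝ)
    (θ : EuclideanSpace ℝ (Fin n)) (hθ : θ ≠ 0)
    (hC : C₁ * ‖θ‖ + C₂ * ‖θ‖⁻¹ ≠ 0) :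
    bFun n C₁ C₂ σ2 θ = σ2 • gradient (fun x => Real.log (piFun n C₁ C₂ x)) θ := by
  have hr : ‖θ‖ ≠ 0 := norm_ne_zero_iff.mpr hθ
  have hgrad := ((hasDerivAt_logPiProfile (2 - n) C₁ C₂ hr hC).hasGradientAt_comp_norm hθ
    ).congr_of_eventuallyEq (log_piFun_eventuallyEq hθ hC)
  rw [hgrad.gradient, bFun, smul_smul]
  congr 1
  field_simp

theorem stmt3 (n : ℕ) (hn : 1 ≤ n) (C₁ C₂ σ2 : ℝ) (hσ2 : 0 < σ2)
    (θ : EuclideanSpace ℝ (Fin n)) (hθ : θ ≠ 0)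
    (hC : C₁ * ‖θ‖ + C₂ * ‖θ‖⁻¹ ≠ 0) :
    bFun n C₁ C₂ σ2 θ = σ2 • gradient (fun x => Real.log (piFun n C₁ C₂ x)) θ :=
  stmt3_general n C₁ C₂ σ2 θ hθ hC
end

section
/- Let n ≥ 1 be an integer, let f : (0, ∞) → ℝ be twice continuously differentiable, and let g(θ) = f(‖θ‖₂) for θ ∈ ℝⁿ, θ ≠ 0. Fix θ ≠ 0 with f(‖θ‖₂) ≠ 0 and set r = ‖θ‖₂. Then the identity −‖∇g(θ)‖₂²/g(θ)² + 2·Δg(θ)/g(θ) = (4n − n²)/r² holds if and only if f(r)f''(r) − (1/2)f'(r)² + ((n−1)/r)·f(r)f'(r) + ((n² − 4n)/(2r²))·f(r)² = 0. -/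
open Filter Topology
open scoped RealInnerProductSpace

section Radial

variable {E : Type*} [NormedAddCommGroup E] [InnerProductSpace ℝ E] {x : E}

theorem hasFDerivAt_norm_of_ne_zero (hx : x ≠ 0) :
    HasFDerivAt (fun y : E => ‖y‖) (‖x‖⁻¹ • innerSL ℝ x) x := by
  have hsq := (hasStrictFDerivAt_norm_sq x).hasFDerivAt.sqrt (by positivity)
  simp only [Real.sqrt_sq (norm_nonneg _)] at hsq
  convert hsq using 1
  ext y
  simp only [smul_apply, two_smul, add_apply, smul_eq_mul]
  field_simp
  ring

theorem hasFDerivAt_comp_norm {f : ℝ → ℝ} {a : ℝ} (hx : x ≠ 0) (hf : HasDerivAt f a ‖x‖) :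
    HasFDerivAt (fun y => f ‖y‖) ((a / ‖x‖) • innerSL ℝ x) x := by
  have h := hf.comp_hasFDerivAt x (hasFDerivAt_norm_of_ne_zero hx)
  rwa [smul_smul, ← div_eq_mul_inv] at h

theorem hasGradientAt_of_eventuallyEq_comp_norm [CompleteSpace E] {g : E → ℝ} {f : ℝ → ℝ}
    {a : ℝ} (hx : x ≠ 0) (hg : g =ᶠ[𝓝 x] fun y => f ‖y‖) (hf : HasDerivAt f a ‖x‖) :
    HasGradientAt g ((a / ‖x‖) • x) x := by
  rw [hasGradientAt_iff_hasFDerivAt]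
  refine ((hasFDerivAt_comp_norm hx hf).congr_of_eventuallyEq hg).congr_fderiv ?_
  ext y
  simp

theorem fderiv_fderiv_apply_of_eventuallyEq_comp_norm {g : E → ℝ} {f f' : ℝ → ℝ} {b : ℝ}
    (hx : x ≠ 0) (hg : g =ᶠ[𝓝 x] fun y => f ‖y‖) (hf : ∀ᶠ t in 𝓝 ‖x‖, HasDerivAt f (f' t) t)
    (hf' : HasDerivAt f' b ‖x‖) (v : E) :
    fderiv ℝ (fun y => fderiv ℝ g y v) x v =
      (b - f' ‖x‖ / ‖x‖) * (⟪x, v⟫ / ‖x‖) ^ 2 + f' ‖x‖ / ‖x‖ * ‖v‖ ^ 2 := by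
  have hr0 : ‖x‖ ≠ 0 := norm_ne_zero_iff.mpr hx
  have hfirst : (fun y => fderiv ℝ g y v) =ᶠ[𝓝 x] fun y => f' ‖y‖ / ‖y‖ * ⟪v, y⟫ := by
    filter_upwards [hg.eventuallyEq_nhds, isOpen_compl_singleton.mem_nhds hx,
      (continuous_norm.tendsto x).eventually hf] with y hgy hy hfy
    rw [((hasFDerivAt_comp_norm hy hfy).congr_of_eventuallyEq hgy).fderiv]
    simp [real_inner_comm]
  have hquot : HasDerivAt (fun t => f' t / t) ((b - f' ‖x‖ / ‖x‖) / ‖x‖) ‖x‖ :=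
    (hf'.div (hasDerivAt_id' _) hr0).congr_deriv (by field_simp)
  have hinner : HasFDerivAt (fun y => ⟪v, y⟫) (innerSL ℝ v) x := (innerSL ℝ v).hasFDerivAt
  rw [hfirst.fderiv_eq, ((hasFDerivAt_comp_norm hx hquot).fun_mul hinner).fderiv]
  simp only [add_apply, smul_apply, coe_innerSL_apply, real_inner_self_eq_norm_sq, smul_eq_mul]
  rw [real_inner_comm]
  ring

end Radial

theorem lap_eq_of_eventuallyEq_comp_norm {n : ℕ} {g : EuclideanSpace ℝ (Fin n) → ℝ}
    {θ : EuclideanSpace ℝ (Fin n)} {f f' : ℝ → ℝ} {b : ℝ}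
    (hθ : θ ≠ 0) (hg : g =ᶠ[𝓝 θ] fun y => f ‖y‖) (hf : ∀ᶠ t in 𝓝 ‖θ‖, HasDerivAt f (f' t) t)
    (hf' : HasDerivAt f' b ‖θ‖) :
    lap g θ = b + (n - 1) * f' ‖θ‖ / ‖θ‖ := by
  simp only [lap, fderiv_fderiv_apply_of_eventuallyEq_comp_norm hθ hg hf hf',
    ← EuclideanSpace.basisFun_apply, Finset.sum_add_distrib, ← Finset.mul_sum, div_pow,
    ← Finset.sum_div, OrthonormalBasis.sum_sq_inner_left]
  simp only [EuclideanSpace.basisFun_apply, PiLp.norm_single, norm_one, one_pow,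
    Finset.sum_const, Finset.card_univ, Fintype.card_fin, nsmul_eq_mul, mul_one]
  have hθ' : ‖θ‖ ≠ 0 := norm_ne_zero_iff.mpr hθ
  field_simp
  ring

theorem stmt6_general (n : ℕ) (f : ℝ → ℝ)
    (hf : ContDiffOn ℝ 2 f (Set.Ioi 0))
    (g : EuclideanSpace ℝ (Fin n) → ℝ) (hg : ∀ θ, θ ≠ 0 → g θ = f ‖θ‖)
    (θ : EuclideanSpace ℝ (Fin n)) (hθ : θ ≠ 0)
    (r : ℝ) (hr : r = ‖θ‖) (hfr : f r ≠ 0) :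
    (-‖gradient g θ‖ ^ 2 / (g θ) ^ 2 + 2 * lap g θ / g θ = (4 * n - n ^ 2) / r ^ 2)
      ↔ (f r * deriv (deriv f) r - (1 / 2) * (deriv f r) ^ 2
          + (((n : ℝ) - 1) / r) * f r * deriv f r
          + (((n : ℝ) ^ 2 - 4 * n) / (2 * r ^ 2)) * (f r) ^ 2 = 0) := by
  subst hr
  have hr : 0 < ‖θ‖ := norm_pos_iff.mpr hθ
  have hgθ : g =ᶠ[𝓝 θ] fun y => f ‖y‖ :=
    eventually_of_mem (isOpen_compl_singleton.mem_nhds hθ) hg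
  have hf₁ : ∀ᶠ t in 𝓝 ‖θ‖, HasDerivAt f (deriv f t) t :=
    (isOpen_Ioi.eventually_mem hr).mono fun t ht =>
      ((hf.differentiableOn two_ne_zero).differentiableAt (isOpen_Ioi.mem_nhds ht)).hasDerivAt
  have hf₂ : HasDerivAt (deriv f) (deriv (deriv f) ‖θ‖) ‖θ‖ :=
    (((hf.deriv_of_isOpen isOpen_Ioi (by norm_num)).differentiableOn one_ne_zero).differentiableAt
      (isOpen_Ioi.mem_nhds hr)).hasDerivAt
  have hgrad : ‖gradient g θ‖ ^ 2 = deriv f ‖θ‖ ^ 2 := by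
    rw [(hasGradientAt_of_eventuallyEq_comp_norm hθ hgθ hf₁.self_of_nhds).gradient, norm_smul,
      norm_div, norm_norm, div_mul_cancel₀ _ hr.ne', Real.norm_eq_abs, sq_abs]
  rw [hgrad, lap_eq_of_eventuallyEq_comp_norm hθ hgθ hf₁ hf₂, hg θ hθ]
  have hr₀ : ‖θ‖ ≠ 0 := hr.ne'
  constructor <;> intro h <;> field_simp at h ⊢ <;> linarith

theorem stmt6 (n : ℕ) (hn : 1 ≤ n) (f : ℝ → ℝ)
    (hf : ContDiffOn ℝ 2 f (Set.Ioi 0))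
    (g : EuclideanSpace ℝ (Fin n) → ℝ) (hg : ∀ θ, θ ≠ 0 → g θ = f ‖θ‖)
    (θ : EuclideanSpace ℝ (Fin n)) (hθ : θ ≠ 0)
    (r : ℝ) (hr : r = ‖θ‖) (hfr : f r ≠ 0) :
    (-‖gradient g θ‖ ^ 2 / (g θ) ^ 2 + 2 * lap g θ / g θ = (4 * n - n ^ 2) / r ^ 2)
      ↔ (f r * deriv (deriv f) r - (1 / 2) * (deriv f r) ^ 2
          + (((n : ℝ) - 1) / r) * f r * deriv f r
          + (((n : ℝ) ^ 2 - 4 * n) / (2 * r ^ 2)) * (f r) ^ 2 = 0) :=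
  stmt6_general n f hf g hg θ hθ r hr hfr
end
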